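/- Suppose θ is an infinite regular cardinal below κ, ⟨H_i : i < θ⟩ is a sequence of pairwise disjoint subsets of κ, and ⟨C_α : α < κ⟩ is a C-sequence such that for every limit α < κ, sup{i < θ : acc(C_α) ∩ H_i ≠ ∅} < θ. Define h(γ) := sup{i < θ : (acc(C_γ) ∪ {γ}) ∩ H_i ≠ ∅} and c(α,β) := max{h(τ) : τ ∈ im(tr(α,β))}. Then c is a closed coloring: for all β < κ and i ≤ θ, the set {α < β : c(α,β) ≤ i} contains all its accumulation points below β. -/

import Mathlib

open Cardinal Set Ordinal

noncomputable section

/-- `s` (a set in a `Type 1`, such as a set of ordinals) has small cardinality `μ`. -/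
def HasCard {α : Type 1} (s : Set α) (μ : Cardinal.{0}) : Prop :=
  Cardinal.mk s = Cardinal.lift.{1, 0} μ

/-- `a < b` for sets of ordinals: every element of `a` is below every element of `b`. -/
def SetLT (a b : Set Ordinal) : Prop := ∀ α ∈ a, ∀ β ∈ b, α < β

/-- `A` is a family of `κ`-many pairwise disjoint subsets of `κ`, each of cardinality `χ'`. -/
def IsDisjFamily (κ χ' : Cardinal) (A : Set (Set Ordinal)) : Prop :=
  (∀ a ∈ A, a ⊆ Set.Iio κ.ord ∧ HasCard a χ') ∧
    A.PairwiseDisjoint id ∧ HasCard A κ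

/-- `A` is a family of `κ`-many pairwise disjoint subsets of `κ`, each of cardinality `< χ`. -/
def IsDisjFamilyLT (κ χ : Cardinal) (A : Set (Set Ordinal)) : Prop :=
  (∀ a ∈ A, a ⊆ Set.Iio κ.ord ∧ Cardinal.mk a < Cardinal.lift.{1, 0} χ) ∧
    A.PairwiseDisjoint id ∧ HasCard A κ

/-- `c` is a coloring of pairs of ordinals below `κ` with colors `< θ`. -/
def IsColoring (κ θ : Cardinal) (c : Ordinal → Ordinal → Ordinal) : Prop :=
  ∀ α β : Ordinal, α < β → β < κ.ord → c α β < θ.ord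

/-- `c` witnesses `U(κ, μ, θ, χ)`. -/
def WitnessU (κ μ θ χ : Cardinal) (c : Ordinal → Ordinal → Ordinal) : Prop :=
  IsColoring κ θ c ∧
    ∀ χ' < χ, ∀ A : Set (Set Ordinal), IsDisjFamily κ χ' A →
      ∀ i < θ.ord, ∃ B ⊆ A, HasCard B μ ∧
        ∀ a ∈ B, ∀ b ∈ B, SetLT a b → ∀ α ∈ a, ∀ β ∈ b, i < c α β

/-- The principle `U(κ, μ, θ, χ)`. -/
def U (κ μ θ χ : Cardinal) : Prop := ∃ c, WitnessU κ μ θ χ c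

/-- `D` is a club in (the ordinal) `o`: a closed and unbounded subset of `o`. -/
def IsClubOrd (D : Set Ordinal) (o : Ordinal) : Prop :=
  D ⊆ Set.Iio o ∧ (∀ α < o, ∃ β ∈ D, α ≤ β) ∧
    ∀ γ < o, 0 < γ → (∀ x < γ, ∃ β ∈ D, x < β ∧ β < γ) → γ ∈ D

/-- `S` is stationary in `o`: it meets every club in `o`. -/
def IsStationaryOrd (S : Set Ordinal) (o : Ordinal) : Prop :=
  ∀ D, IsClubOrd D o → (S ∩ D).Nonempty

/-- A `C`-sequence over `κ`. -/
def IsCSeq (κ : Cardinal) (C : Ordinal → Set Ordinal) : Prop :=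
  C 0 = ∅ ∧ (∀ α, C (α + 1) = {α}) ∧
    ∀ α < κ.ord, Order.IsSuccLimit α → IsClubOrd (C α) α

/-- The walk `Tr(α,β)` from `β` down to `α` along the `C`-sequence `C`. -/
def walk (C : Ordinal → Set Ordinal) (α β : Ordinal) : ℕ → Ordinal
  | 0 => β
  | n + 1 =>
      if α < walk C α β n then sInf {γ ∈ C (walk C α β n) | α ≤ γ} else α

/-- `ρ₂(α,β)`: the number of steps of the walk from `β` down to `α`. -/
def rho2 (C : Ordinal → Set Ordinal) (α β : Ordinal) : ℕ :=
  sInf {n : ℕ | walk C α β n = α}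

/-- `λ₂(α,β) = sup (α ∩ {sup (C_δ ∩ α) : δ ∈ im (tr (α,β))})`. -/
def lambda2 (C : Ordinal → Set Ordinal) (α β : Ordinal) : Ordinal :=
  sSup {x : Ordinal | x < α ∧
    ∃ n < rho2 C α β, x = sSup (C (walk C α β n) ∩ Set.Iio α)}

/-- The set of accumulation points of `s` that belong to `s`. -/
def accSet (s : Set Ordinal) : Set Ordinal :=
  {δ ∈ s | 0 < δ ∧ ∀ x < δ, ∃ y ∈ s, x < y ∧ y < δ}

/-- `c` is a closed coloring: for all `β < κ` and `i ≤ θ`, the set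
`{α < β : c α β ≤ i}` contains all of its accumulation points below `β`. -/
def ClosedColoring (κ θ : Cardinal) (c : Ordinal → Ordinal → Ordinal) : Prop :=
  ∀ β < κ.ord, ∀ i ≤ θ.ord, ∀ γ < β, 0 < γ →
    (∀ x < γ, ∃ α, x < α ∧ α < γ ∧ c α β ≤ i) → c γ β ≤ i

/-- `h(γ) := sup {i < θ : (acc(C_γ) ∪ {γ}) ∩ H_i ≠ ∅}`. -/
def hH (θ : Cardinal) (C : Ordinal → Set Ordinal) (H : Ordinal → Set Ordinal)
    (γ : Ordinal) : Ordinal :=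
  sSup {i | i < θ.ord ∧ ((accSet (C γ) ∪ {γ}) ∩ H i).Nonempty}

/-- `c(α,β) := max {h(τ) : τ ∈ im (tr (α,β))}`. -/
def colorH (C : Ordinal → Set Ordinal) (h : Ordinal → Ordinal)
    (α β : Ordinal) : Ordinal :=
  sSup {x | ∃ n < rho2 C α β, x = h (walk C α β n)}

/-!
For `0 < γ < β`, `λ₂(γ, β) < γ`, being the supremum of finitely many ordinals below `γ`.
If `δ` is a step of the walk from `β` to `γ` other than the last one, then `C_δ ∩ γ` is bounded
below `γ` (otherwise `γ ∈ C_δ` by closure and the walk would stop at `γ` right after `δ`), hence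
bounded by `λ₂(γ, β)`. So for `λ₂(γ, β) < α < γ` the walk from `β` to `α` takes the same steps as
the walk to `γ` until that walk stops, i.e. `tr(γ, β) ⊆ tr(α, β)`, and therefore
`c(γ, β) ≤ c(α, β)`. Any `γ` approximated by such `α` with `c(α, β) ≤ i` thus has `c(γ, β) ≤ i`.
-/

theorem finite_setOf_exists_lt_eq {X : Type*} (k : ℕ) (f : ℕ → X) :
    {x | ∃ n < k, x = f n}.Finite :=
  ((finite_Iio k).image f).subset (by rintro _ ⟨n, hn, rfl⟩; exact ⟨n, hn, rfl⟩)

theorem walk_succ_of_lt {C : Ordinal → Set Ordinal} {α β : Ordinal} {n : ℕ}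
    (h : α < walk C α β n) :
    walk C α β (n + 1) = sInf {γ ∈ C (walk C α β n) | α ≤ γ} := by
  rw [walk, if_pos h]

theorem lambda2_lt (C : Ordinal → Set Ordinal) {γ β : Ordinal} (hγ : 0 < γ) :
    lambda2 C γ β < γ := by
  rcases eq_empty_or_nonempty {x | x < γ ∧
      ∃ n < rho2 C γ β, x = sSup (C (walk C γ β n) ∩ Iio γ)} with hempty | hne
  · rwa [lambda2, hempty, csSup_empty, Ordinal.bot_eq_zero]
  · exact (hne.csSup_mem ((finite_setOf_exists_lt_eq _ _).subset fun _ hx => hx.2)).1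

theorem colorH_le_colorH {C : Ordinal → Set Ordinal} (f : Ordinal → Ordinal) {α γ β : Ordinal}
    (htr : ∀ n < rho2 C γ β, ∃ m < rho2 C α β, walk C α β m = walk C γ β n) :
    colorH C f γ β ≤ colorH C f α β := by
  refine csSup_le' ?_
  rintro _ ⟨n, hn, rfl⟩
  obtain ⟨m, hm, hwalk⟩ := htr n hn
  exact le_csSup (finite_setOf_exists_lt_eq _ _).bddAbove ⟨m, hm, by rw [hwalk]⟩

namespace IsCSeq

variable {κ : Cardinal} {C : Ordinal → Set Ordinal}

theorem subset_Iio (hC : IsCSeq κ C) {δ : Ordinal} (hδ : δ < κ.ord) : C δ ⊆ Iio δ := by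
  rcases Ordinal.zero_or_succ_or_isSuccLimit δ with rfl | ⟨ξ, rfl⟩ | hlim
  · simp [hC.1]
  · rw [Order.succ_eq_add_one, hC.2.1, singleton_subset_iff]
    exact Order.lt_succ ξ
  · exact (hC.2.2 δ hδ hlim).1

theorem mem_of_isAcc (hC : IsCSeq κ C) {δ γ : Ordinal} (hδ : δ < κ.ord) (hγ0 : 0 < γ)
    (hγδ : γ < δ) (hacc : ∀ x < γ, ∃ y ∈ C δ, x < y ∧ y < γ) : γ ∈ C δ := by
  rcases Ordinal.zero_or_succ_or_isSuccLimit δ with rfl | ⟨ξ, rfl⟩ | hlim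
  · simp at hγδ
  · rw [Order.succ_eq_add_one, hC.2.1] at hacc
    obtain ⟨y, rfl, -, hyγ⟩ := hacc 0 hγ0
    obtain ⟨y, rfl, hlt, -⟩ := hacc y hyγ
    exact absurd hlt (lt_irrefl y)
  · exact (hC.2.2 δ hδ hlim).2.2 γ hγδ hγ0 hacc

theorem exists_mem_ge (hC : IsCSeq κ C) {δ α : Ordinal} (hδ : δ < κ.ord) (hαδ : α < δ) :
    ∃ y ∈ C δ, α ≤ y := by
  rcases Ordinal.zero_or_succ_or_isSuccLimit δ with rfl | ⟨ξ, rfl⟩ | hlim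
  · simp at hαδ
  · rw [Order.succ_eq_add_one, hC.2.1]
    exact ⟨ξ, rfl, Order.lt_succ_iff.mp hαδ⟩
  · exact (hC.2.2 δ hδ hlim).2.1 α hαδ

variable {α β : Ordinal}

theorem walk_succ_spec (hC : IsCSeq κ C) (hβ : β < κ.ord) {n : ℕ}
    (hlt : α < walk C α β n) (hle : walk C α β n ≤ β) :
    walk C α β (n + 1) ∈ C (walk C α β n) ∧ α ≤ walk C α β (n + 1) ∧
      walk C α β (n + 1) < walk C α β n := by
  have hδ := hle.trans_lt hβ
  have hmem := csInf_mem (s := {y ∈ C (walk C α β n) | α ≤ y}) (hC.exists_mem_ge hδ hlt)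
  rw [walk_succ_of_lt hlt]
  exact ⟨hmem.1, hmem.2, hC.subset_Iio hδ hmem.1⟩

theorem walk_mem_Icc (hC : IsCSeq κ C) (hβ : β < κ.ord) (hαβ : α ≤ β) (n : ℕ) :
    walk C α β n ∈ Icc α β := by
  induction n with
  | zero => exact ⟨hαβ, le_rfl⟩
  | succ n ih =>
    by_cases hlt : α < walk C α β n
    · obtain ⟨-, hα, hlt'⟩ := hC.walk_succ_spec hβ hlt ih.2
      exact ⟨hα, hlt'.le.trans ih.2⟩
    · rw [walk, if_neg hlt]
      exact ⟨le_rfl, hαβ⟩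

theorem walk_rho2 (hC : IsCSeq κ C) (hβ : β < κ.ord) (hαβ : α < β) :
    walk C α β (rho2 C α β) = α := by
  suffices ∃ n, walk C α β n = α from Nat.sInf_mem this
  by_contra! hne
  have hlt n : α < walk C α β n :=
    lt_of_le_of_ne (hC.walk_mem_Icc hβ hαβ.le n).1 (hne n).symm
  obtain ⟨_, ⟨n, rfl⟩, hmin⟩ :=
    wellFounded_lt.has_min (range (walk C α β)) ⟨β, 0, rfl⟩
  exact hmin _ ⟨n + 1, rfl⟩
    (hC.walk_succ_spec hβ (hlt n) (hC.walk_mem_Icc hβ hαβ.le n).2).2.2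

theorem lt_walk_of_lt_rho2 (hC : IsCSeq κ C) (hβ : β < κ.ord) (hαβ : α ≤ β) {n : ℕ}
    (hn : n < rho2 C α β) : α < walk C α β n :=
  lt_of_le_of_ne (hC.walk_mem_Icc hβ hαβ n).1 (Ne.symm (Nat.notMem_of_lt_sInf hn))

variable {γ : Ordinal}

theorem sSup_inter_Iio_lt (hC : IsCSeq κ C) (hβ : β < κ.ord) (hγ0 : 0 < γ) (hγβ : γ < β)
    {n : ℕ} (hn : n + 1 < rho2 C γ β) : sSup (C (walk C γ β n) ∩ Iio γ) < γ := by
  by_contra! hsup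
  have hγδ := hC.lt_walk_of_lt_rho2 hβ hγβ.le (Nat.lt_of_succ_lt hn)
  have hγmem : γ ∈ C (walk C γ β n) := by
    refine hC.mem_of_isAcc ((hC.walk_mem_Icc hβ hγβ.le n).2.trans_lt hβ) hγ0 hγδ fun x hx => ?_
    obtain ⟨y, ⟨hy, hyγ⟩, hxy⟩ := exists_lt_of_lt_csSup' (hx.trans_le hsup)
    exact ⟨y, hy, hxy, hyγ⟩
  have hle : walk C γ β (n + 1) ≤ γ := by
    rw [walk_succ_of_lt hγδ]
    exact csInf_le (OrderBot.bddBelow _) ⟨hγmem, le_rfl⟩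
  exact (hC.lt_walk_of_lt_rho2 hβ hγβ.le hn).not_ge hle

section TraceInclusion

variable (hC : IsCSeq κ C) (hβ : β < κ.ord) (hγ0 : 0 < γ) (hγβ : γ < β)
  (hlam : lambda2 C γ β < α) (hαγ : α < γ)
include hC hβ hγ0 hγβ hlam hαγ

theorem walk_eq_of_lambda2_lt : ∀ n < rho2 C γ β, walk C α β n = walk C γ β n := by
  intro n
  induction n with
  | zero => intro _; rfl
  | succ n ih =>
    intro hn
    have hwalk := ih (Nat.lt_of_succ_lt hn)
    have hγδ := hC.lt_walk_of_lt_rho2 hβ hγβ.le (Nat.lt_of_succ_lt hn)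
    rw [walk_succ_of_lt (hwalk ▸ hαγ.trans hγδ), walk_succ_of_lt hγδ, hwalk]
    congr 1
    ext y
    refine ⟨fun ⟨hy, hαy⟩ => ⟨hy, ?_⟩, fun ⟨hy, hγy⟩ => ⟨hy, hαγ.le.trans hγy⟩⟩
    by_contra! hyγ
    have hsup := hC.sSup_inter_Iio_lt hβ hγ0 hγβ hn
    have hy_le : y ≤ sSup (C (walk C γ β n) ∩ Iio γ) :=
      le_csSup (bddAbove_Iio.mono inter_subset_right) ⟨hy, hyγ⟩
    have hsup_le : sSup (C (walk C γ β n) ∩ Iio γ) ≤ lambda2 C γ β :=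
      le_csSup ⟨γ, fun _ hx => hx.1.le⟩ ⟨hsup, n, Nat.lt_of_succ_lt hn, rfl⟩
    exact (hαy.trans (hy_le.trans hsup_le)).not_gt hlam

theorem lt_rho2_of_lambda2_lt {n : ℕ} (hn : n < rho2 C γ β) : n < rho2 C α β := by
  by_contra! hle
  have hα := hC.walk_rho2 hβ (hαγ.trans hγβ)
  rw [hC.walk_eq_of_lambda2_lt hβ hγ0 hγβ hlam hαγ _ (hle.trans_lt hn)] at hα
  exact (hαγ.trans (hC.lt_walk_of_lt_rho2 hβ hγβ.le (hle.trans_lt hn))).ne' hα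

end TraceInclusion

end IsCSeq

theorem stmt13_general (κ θ : Cardinal) (C : Ordinal → Set Ordinal)
    (H : Ordinal → Set Ordinal)
    (hC : IsCSeq κ C) :
    ClosedColoring κ θ (colorH C (hH θ C H)) := by
  intro β hβ i _ γ hγβ hγ0 happrox
  obtain ⟨α, hlam, hαγ, hαi⟩ := happrox _ (lambda2_lt C hγ0)
  refine (colorH_le_colorH _ fun n hn => ⟨n, ?_, ?_⟩).trans hαi
  · exact hC.lt_rho2_of_lambda2_lt hβ hγ0 hγβ hlam hαγ hn
  · exact hC.walk_eq_of_lambda2_lt hβ hγ0 hγβ hlam hαγ n hn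

theorem stmt13 (κ θ : Cardinal) (C : Ordinal → Set Ordinal)
    (H : Ordinal → Set Ordinal)
    (hκreg : κ.IsRegular) (hκunc : ℵ₀ < κ)
    (hθreg : θ.IsRegular) (hθκ : θ < κ)
    (hHdisj : ∀ i < θ.ord, ∀ j < θ.ord, i ≠ j → Disjoint (H i) (H j))
    (hC : IsCSeq κ C)
    (hsmall : ∀ α < κ.ord, Order.IsSuccLimit α →
      sSup {i | i < θ.ord ∧ (accSet (C α) ∩ H i).Nonempty} < θ.ord) :
    ClosedColoring κ θ (colorH C (hH θ C H)) :=
  stmt13_general κ θ C H hC
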